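/- arXiv:1404.7770 — 2 statements merged into one kernel-verified Lean document; each statement's English description precedes it below -/
import Mathlib

section
/- For every finite game structure G, the set of finite words over the alphabet A × V that encode histories of G at which the grand coalition attains certainty is a regular language. -/
/-- The state reached after following the word `w` (a list of (action profile, state) pairs)
starting from state `v`: the last state of `w`, or `v` if `w` is empty. -/
def endFrom {α V : Type} : V → List (α × V) → V
  | v, [] => v
  | _, p :: w => endFrom p.2 w

/-- An `n`-player game structure with imperfect information: states `V` with an initial state,
action sets `A i` for each player, a total move relation labelled by action profiles,
observation functions `obs i : V → B i` for each player, and the observation function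
`obs0 : V → B0` of the fictitious, less informed Player 0, which is a coarsening of
every player's observation. -/
structure GameStructure (n : ℕ) (V : Type) (A : Fin n → Type) (B : Fin n → Type)
    (B0 : Type) where
  init : V
  move : V → (∀ i, A i) → V → Prop
  move_total : ∀ v a, ∃ v', move v a v'
  obs : ∀ i : Fin n, V → B i
  obs0 : V → B0
  obs0_coarse : ∀ v v' : V, (∃ i, obs i v = obs i v') → obs0 v = obs0 v'

namespace GameStructure

variable {n : ℕ} {V : Type} {A : Fin n → Type} {B : Fin n → Type} {B0 : Type}

variable (G : GameStructure n V A B B0)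

/-- `G.IsHistFrom v w` holds if the word `w` describes a sequence of legal moves from `v`. -/
def IsHistFrom : V → List ((∀ i, A i) × V) → Prop
  | _, [] => True
  | v, p :: w => G.move v p.1 p.2 ∧ IsHistFrom p.2 w

/-- `w` encodes a history: a legal sequence of moves from the initial state.
The history `v₀ a₀ v₁ … a_{ℓ-1} v_ℓ` is encoded as the word `(a₀,v₁) … (a_{ℓ-1},v_ℓ)`. -/
def IsHistWord (w : List ((∀ i, A i) × V)) : Prop := G.IsHistFrom G.init w

/-- The final state of the history encoded by `w`. -/
def endState (w : List ((∀ i, A i) × V)) : V := endFrom G.init w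

/-- The sequence of Player 0's observations of the states of the history encoded by `w`
(the observation of the initial state is omitted, as it is fixed). Two histories are
`∼⁰`-indistinguishable iff their `obs0Trace`s are equal (which forces equal length). -/
def obs0Trace (w : List ((∀ i, A i) × V)) : List B0 := w.map fun p => G.obs0 p.2

/-- The grand coalition attains certainty at the history `w`: every history
`∼⁰`-indistinguishable from `w` ends at the same state. -/
def Certain (w : List ((∀ i, A i) × V)) : Prop :=
  ∀ w', G.IsHistWord w' → G.obs0Trace w' = G.obs0Trace w → G.endState w' = G.endState w

/-- A play: an infinite legal sequence of states and action profiles from the initial state. -/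
structure Play (G : GameStructure n V A B B0) where
  st : ℕ → V
  act : ℕ → ∀ i, A i
  init_eq : st 0 = G.init
  valid : ∀ k, G.move (st k) (act k) (st (k + 1))

/-- The word encoding the prefix history of length `ℓ` of the play `π`. -/
def Play.prefixWord {G : GameStructure n V A B B0} (π : G.Play) (ℓ : ℕ) :
    List ((∀ i, A i) × V) :=
  (List.range ℓ).map fun k => (π.act k, π.st (k + 1))

/-- The play `π` has recurring certainty: the grand coalition attains certainty at
infinitely many of its finite prefixes. -/
def Play.HasRecurringCertainty {G : GameStructure n V A B B0} (π : G.Play) : Prop :=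
  ∀ m : ℕ, ∃ ℓ, m ≤ ℓ ∧ G.Certain (π.prefixWord ℓ)

/-- The game structure `G` has recurring certainty: every play does. -/
def RecurringCertainty : Prop := ∀ π : G.Play, π.HasRecurringCertainty

/-- `G` has periodic certainty with bound `t`: along every play, every prefix history can be
extended by at most `t` further rounds, within the play, to a history at which the grand
coalition attains certainty. -/
def PeriodicWithBound (t : ℕ) : Prop :=
  ∀ π : G.Play, ∀ m : ℕ, ∃ ℓ, m ≤ ℓ ∧ ℓ ≤ m + t ∧ G.Certain (π.prefixWord ℓ)

/-- `G` has periodic certainty: periodic certainty with some uniform bound `t`. -/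
def PeriodicCertainty : Prop := ∃ t, G.PeriodicWithBound t

end GameStructure

/-!
Player 0's knowledge after a history — the set of states in which some indistinguishable history
ends — is updated by a one-letter step that depends only on the previous knowledge and the new
observation. A deterministic automaton whose states are pairs (current state, knowledge set),
plus a rejecting sink for illegal moves, therefore tracks both; certainty is the condition that
the knowledge set is contained in the singleton of the current state.
-/

lemma endFrom_append_singleton {α V : Type} (v : V) (w : List (α × V)) (p : α × V) :
    endFrom v (w ++ [p]) = p.2 := by
  induction w generalizing v with
  | nil => rfl
  | cons q w ih => exact ih q.2

namespace GameStructure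

variable {n : ℕ} {V : Type} {A : Fin n → Type} {B : Fin n → Type} {B0 : Type}
  (G : GameStructure n V A B B0)

lemma isHistFrom_append_singleton (v : V) (w : List ((∀ i, A i) × V)) (p : (∀ i, A i) × V) :
    G.IsHistFrom v (w ++ [p]) ↔ G.IsHistFrom v w ∧ G.move (endFrom v w) p.1 p.2 := by
  induction w generalizing v with
  | nil => simp [IsHistFrom, endFrom]
  | cons q w ih => simp [IsHistFrom, endFrom, ih, and_assoc]

lemma obs0Trace_eq_append_singleton_iff (w' w : List ((∀ i, A i) × V)) (p : (∀ i, A i) × V) :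
    G.obs0Trace w' = G.obs0Trace (w ++ [p]) ↔
      ∃ w₂ q, w' = w₂ ++ [q] ∧ G.obs0Trace w₂ = G.obs0Trace w ∧ G.obs0 q.2 = G.obs0 p.2 := by
  simp only [obs0Trace, List.map_append, List.map_cons, List.map_nil, List.map_eq_append_iff,
    List.map_eq_singleton_iff]
  constructor
  · rintro ⟨w₂, _, rfl, htr, q, rfl, hq⟩
    exact ⟨w₂, q, rfl, htr, hq⟩
  · rintro ⟨w₂, q, rfl, htr, hq⟩
    exact ⟨w₂, [q], rfl, htr, q, rfl, hq⟩

def knowledgeSet (w : List ((∀ i, A i) × V)) : Set V :=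
  {u | ∃ w', G.IsHistWord w' ∧ G.obs0Trace w' = G.obs0Trace w ∧ G.endState w' = u}

def knowledgeUpdate (S : Set V) (b : B0) : Set V :=
  {u' | ∃ u ∈ S, ∃ a, G.move u a u' ∧ G.obs0 u' = b}

lemma knowledgeSet_nil : G.knowledgeSet [] = {G.init} := by
  ext u
  constructor
  · rintro ⟨w', -, htr, rfl⟩
    rw [List.eq_nil_of_map_eq_nil htr]
    rfl
  · rintro rfl
    exact ⟨[], trivial, rfl, rfl⟩

lemma knowledgeSet_append_singleton (w : List ((∀ i, A i) × V)) (p : (∀ i, A i) × V) :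
    G.knowledgeSet (w ++ [p]) = G.knowledgeUpdate (G.knowledgeSet w) (G.obs0 p.2) := by
  ext u'
  simp only [knowledgeSet, knowledgeUpdate, Set.mem_ofPred_eq, obs0Trace_eq_append_singleton_iff]
  constructor
  · rintro ⟨_, hist, ⟨w₂, q, rfl, htr, hobs⟩, rfl⟩
    obtain ⟨hist₂, hmove⟩ := (G.isHistFrom_append_singleton _ _ _).mp hist
    refine ⟨_, ⟨w₂, hist₂, htr, rfl⟩, q.1, ?_, ?_⟩ <;>
      simpa only [endState, endFrom_append_singleton]
  · rintro ⟨_, ⟨w₂, hist₂, htr, rfl⟩, a, hmove, hobs⟩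
    exact ⟨w₂ ++ [(a, u')], (G.isHistFrom_append_singleton _ _ _).mpr ⟨hist₂, hmove⟩,
      ⟨w₂, (a, u'), rfl, htr, hobs⟩, endFrom_append_singleton _ _ _⟩

lemma certain_iff_knowledgeSet_subset (w : List ((∀ i, A i) × V)) :
    G.Certain w ↔ G.knowledgeSet w ⊆ {G.endState w} := by
  constructor
  · rintro hcert _ ⟨w', hist, htr, rfl⟩
    exact hcert w' hist htr
  · intro hsub w' hist htr
    exact hsub ⟨w', hist, htr, rfl⟩

open Classical in
/-- The state `none` is a rejecting sink, entered on the first illegal move. -/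
noncomputable def certaintyDFA : DFA ((∀ i, A i) × V) (Option (V × Set V)) where
  step q p := q.bind fun (v, S) =>
    if G.move v p.1 p.2 then some (p.2, G.knowledgeUpdate S (G.obs0 p.2)) else none
  start := some (G.init, {G.init})
  accept := {q | ∃ v S, q = some (v, S) ∧ S ⊆ {v}}

open Classical in
lemma certaintyDFA_eval (w : List ((∀ i, A i) × V)) :
    G.certaintyDFA.eval w =
      if G.IsHistWord w then some (G.endState w, G.knowledgeSet w) else none := by
  induction w using List.reverseRecOn with
  | nil => simp [certaintyDFA, IsHistWord, IsHistFrom, endState, endFrom, knowledgeSet_nil]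
  | append_singleton w p ih =>
    have hist_iff : G.IsHistWord (w ++ [p]) ↔
        G.IsHistWord w ∧ G.move (G.endState w) p.1 p.2 :=
      G.isHistFrom_append_singleton _ _ _
    rw [DFA.eval_append_singleton, ih]
    by_cases hist : G.IsHistWord w
    · simp [certaintyDFA, hist, hist_iff, endState, endFrom_append_singleton,
        ← knowledgeSet_append_singleton]
    · simp [certaintyDFA, hist, hist_iff]

end GameStructure

theorem certain_histories_regular_general
    {n : ℕ} {V : Type} {A : Fin n → Type} {B : Fin n → Type} {B0 : Type}
    [Fintype V]
    (G : GameStructure n V A B B0) :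
    ∃ (Q : Type) (_ : Fintype Q) (M : DFA ((∀ i, A i) × V) Q),
      ∀ w : List ((∀ i, A i) × V),
        w ∈ M.accepts ↔ (G.IsHistWord w ∧ G.Certain w) := by
  classical
  refine ⟨_, inferInstance, G.certaintyDFA, fun w => ?_⟩
  rw [DFA.mem_accepts, G.certaintyDFA_eval, G.certain_iff_knowledgeSet_subset]
  by_cases hist : G.IsHistWord w <;> simp [GameStructure.certaintyDFA, hist]

/-- The set of words over `A × V` encoding histories at which the grand coalition attains
certainty is a regular language (recognised by a deterministic finite automaton). -/
theorem certain_histories_regular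
    {n : ℕ} {V : Type} {A : Fin n → Type} {B : Fin n → Type} {B0 : Type}
    (hn : 1 ≤ n) [Fintype V] [∀ i, Fintype (A i)] [∀ i, Nonempty (A i)]
    [∀ i, Fintype (B i)] [Fintype B0]
    (G : GameStructure n V A B B0) :
    ∃ (Q : Type) (_ : Fintype Q) (M : DFA ((∀ i, A i) × V) Q),
      ∀ w : List ((∀ i, A i) × V),
        w ∈ M.accepts ↔ (G.IsHistWord w ∧ G.Certain w) :=
  certain_histories_regular_general G
end

section
/- Every finite game structure with recurring certainty also has periodic certainty: if every play of G has infinitely many prefixes at which the grand coalition attains certainty, then there exists a uniform bound t ∈ ℕ such that for every play π of G and every prefix history ρ of π, some prefix ρ' of π that extends ρ by at most t further rounds is a history at which the grand coalition attains certainty. -/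
/-! ### Auxiliary machinery for the proof -/

/-- The index function used to pump a loop between positions `i` and `i + d` of a play. -/
def loopIndex (i d k : ℕ) : ℕ := if k < i then k else i + (k - i) % d

theorem loopIndex_le (i d k : ℕ) (hk : k ≤ i) : loopIndex i d k = k := by
  unfold loopIndex
  by_cases h : k < i
  · rw [if_pos h]
  · have : k = i := by omega
    subst this
    simp

theorem loopIndex_ge (i d k : ℕ) (hk : i ≤ k) : loopIndex i d k = i + (k - i) % d :=
  if_neg (by omega)

namespace GameStructure

variable {n : ℕ} {V : Type} {A : Fin n → Type} {B : Fin n → Type} {B0 : Type}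
variable (G : GameStructure n V A B B0)

theorem endFrom_append (v : V) (w₁ w₂ : List ((∀ i, A i) × V)) :
    endFrom v (w₁ ++ w₂) = endFrom (endFrom v w₁) w₂ := by
  induction w₁ generalizing v with
  | nil => rfl
  | cons p w ih => simpa [endFrom] using ih p.2

theorem isHistFrom_append (v : V) (w₁ w₂ : List ((∀ i, A i) × V)) :
    G.IsHistFrom v (w₁ ++ w₂) ↔ G.IsHistFrom v w₁ ∧ G.IsHistFrom (endFrom v w₁) w₂ := by
  induction w₁ generalizing v with
  | nil => simp [IsHistFrom, endFrom]
  | cons p w ih => simp [IsHistFrom, endFrom, ih p.2, and_assoc]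

/-- The knowledge set of a trace: all states reachable by some history with that trace. -/
def knowledge (tr : List B0) : Set V :=
  {v | ∃ w, G.IsHistWord w ∧ G.obs0Trace w = tr ∧ G.endState w = v}

/-- One-step update of a knowledge set upon a new observation. -/
def stepSet (S : Set V) (b : B0) : Set V :=
  {v' | ∃ v ∈ S, ∃ a, G.move v a v' ∧ G.obs0 v' = b}

/-- Iterated update of a knowledge set along a list of observations. -/
def runSet (G : GameStructure n V A B B0) : Set V → List B0 → Set V
  | S, [] => S
  | S, b :: s => runSet G (G.stepSet S b) s

theorem knowledge_concat (tr : List B0) (b : B0) :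
    G.knowledge (tr ++ [b]) = G.stepSet (G.knowledge tr) b := by
  ext v'
  constructor
  · rintro ⟨w, hw, htr, rfl⟩
    rcases List.eq_nil_or_concat w with rfl | ⟨w₁, p, rfl⟩
    · exact absurd htr (by simp [obs0Trace])
    · rw [List.concat_eq_append] at hw htr ⊢
      rw [IsHistWord, G.isHistFrom_append] at hw
      rw [obs0Trace, List.map_append] at htr
      obtain ⟨h1, h2⟩ := List.append_inj' htr rfl
      simp only [List.map_cons, List.map_nil, List.cons.injEq, and_true] at h2
      have he : G.endState (w₁ ++ [p]) = p.2 := by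
        rw [endState, endFrom_append]; rfl
      rw [he]
      exact ⟨endFrom G.init w₁, ⟨w₁, hw.1, h1, rfl⟩, p.1, hw.2.1, h2⟩
  · rintro ⟨v, ⟨w, hw, htr, rfl⟩, a, hmv, hb⟩
    refine ⟨w ++ [(a, v')], ?_, ?_, ?_⟩
    · rw [IsHistWord, G.isHistFrom_append]
      exact ⟨hw, hmv, trivial⟩
    · rw [obs0Trace, List.map_append, ← obs0Trace, htr]
      simp [hb]
    · rw [endState, endFrom_append]; rfl

theorem knowledge_append (tr s : List B0) :
    G.knowledge (tr ++ s) = G.runSet (G.knowledge tr) s := by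
  induction s generalizing tr with
  | nil => simp [runSet]
  | cons b s ih =>
    have e : tr ++ b :: s = (tr ++ [b]) ++ s := by simp
    rw [e, ih, knowledge_concat]
    rfl

theorem prefixWord_succ (π : G.Play) (ℓ : ℕ) :
    π.prefixWord (ℓ + 1) = π.prefixWord ℓ ++ [(π.act ℓ, π.st (ℓ + 1))] := by
  simp [Play.prefixWord, List.range_succ]

theorem endState_prefixWord (π : G.Play) (ℓ : ℕ) :
    G.endState (π.prefixWord ℓ) = π.st ℓ := by
  induction ℓ with
  | zero =>
    show G.endState (List.map _ (List.range 0)) = _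
    simp only [List.range_zero, List.map_nil]
    exact π.init_eq.symm
  | succ ℓ ih =>
    rw [G.prefixWord_succ, endState, endFrom_append]
    rfl

theorem isHistWord_prefixWord (π : G.Play) (ℓ : ℕ) : G.IsHistWord (π.prefixWord ℓ) := by
  induction ℓ with
  | zero =>
    show G.IsHistFrom G.init (List.map _ (List.range 0))
    simp only [List.range_zero, List.map_nil]
    trivial
  | succ ℓ ih =>
    rw [G.prefixWord_succ, IsHistWord, G.isHistFrom_append]
    refine ⟨ih, ?_, trivial⟩
    have he : endFrom G.init (π.prefixWord ℓ) = π.st ℓ := G.endState_prefixWord π ℓ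
    rw [he]
    exact π.valid ℓ

/-- The trace of the length-`ℓ` prefix of a play. -/
def ptrace (π : G.Play) (ℓ : ℕ) : List B0 := G.obs0Trace (π.prefixWord ℓ)

theorem ptrace_eq (π : G.Play) (ℓ : ℕ) :
    G.ptrace π ℓ = (List.range ℓ).map fun k => G.obs0 (π.st (k + 1)) := by
  unfold ptrace obs0Trace Play.prefixWord
  rw [List.map_map]
  rfl

/-- The knowledge set of the length-`ℓ` prefix of a play. -/
def Kn (π : G.Play) (ℓ : ℕ) : Set V := G.knowledge (G.ptrace π ℓ)

theorem Kn_congr (π π' : G.Play) (ℓ ℓ' : ℕ) (h : π.prefixWord ℓ = π'.prefixWord ℓ') :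
    G.Kn π ℓ = G.Kn π' ℓ' := by
  unfold Kn ptrace
  rw [h]

theorem Kn_add (π : G.Play) (a c : ℕ) :
    G.Kn π (a + c)
      = G.runSet (G.Kn π a) ((List.range c).map fun k => G.obs0 (π.st (a + k + 1))) := by
  have h : G.ptrace π (a + c)
      = G.ptrace π a ++ (List.range c).map fun k => G.obs0 (π.st (a + k + 1)) := by
    rw [ptrace_eq, ptrace_eq, List.range_add, List.map_append, List.map_map]
    rfl
  rw [Kn, h, knowledge_append]
  rfl

theorem st_mem_Kn (π : G.Play) (ℓ : ℕ) : π.st ℓ ∈ G.Kn π ℓ :=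
  ⟨π.prefixWord ℓ, G.isHistWord_prefixWord π ℓ, rfl, G.endState_prefixWord π ℓ⟩

theorem certain_iff (π : G.Play) (ℓ : ℕ) :
    G.Certain (π.prefixWord ℓ) ↔ G.Kn π ℓ ⊆ {π.st ℓ} := by
  constructor
  · rintro h v ⟨w, hw, htr, rfl⟩
    have hv := h w hw htr
    rw [G.endState_prefixWord] at hv
    exact hv
  · intro h w hw htr
    have hm : G.endState w ∈ G.Kn π ℓ := ⟨w, hw, htr, rfl⟩
    have := h hm
    rw [G.endState_prefixWord]
    exact this

/-- The play obtained from `π` by repeating the segment between positions `i` and `j`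
forever (provided `π` visits the same state at `i` and `j`). -/
def Play.loop {G : GameStructure n V A B B0} (π : G.Play) (i j : ℕ) (hij : i < j)
    (hst : π.st i = π.st j) : G.Play where
  st k := π.st (loopIndex i (j - i) k)
  act k := π.act (loopIndex i (j - i) k)
  init_eq := by
    show π.st (loopIndex i (j - i) 0) = G.init
    rw [loopIndex_le _ _ _ (Nat.zero_le _)]
    exact π.init_eq
  valid k := by
    show G.move (π.st (loopIndex i (j - i) k)) (π.act (loopIndex i (j - i) k))
      (π.st (loopIndex i (j - i) (k + 1)))
    by_cases hk : k + 1 ≤ i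
    · rw [loopIndex_le _ _ _ (by omega), loopIndex_le _ _ _ hk]
      exact π.valid k
    · have hki : i ≤ k := by omega
      rw [loopIndex_ge _ _ _ hki, loopIndex_ge _ _ _ (by omega)]
      have hd : 0 < j - i := by omega
      have hrd : (k - i) % (j - i) < j - i := Nat.mod_lt _ hd
      have hmod : (k + 1 - i) % (j - i) = ((k - i) % (j - i) + 1) % (j - i) := by
        rw [show k + 1 - i = k - i + 1 from by omega, ← Nat.mod_add_mod]
      by_cases hcase : (k - i) % (j - i) + 1 < j - i
      · rw [hmod, Nat.mod_eq_of_lt hcase,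
          show i + ((k - i) % (j - i) + 1) = i + (k - i) % (j - i) + 1 from by omega]
        exact π.valid (i + (k - i) % (j - i))
      · have hre : (k - i) % (j - i) + 1 = j - i := by omega
        rw [hmod, hre, Nat.mod_self, Nat.add_zero]
        have e : i + (k - i) % (j - i) + 1 = j := by omega
        have hv := π.valid (i + (k - i) % (j - i))
        rw [e] at hv
        rw [hst]
        exact hv

theorem Play.loop_st {G : GameStructure n V A B B0} (π : G.Play) (i j k : ℕ) (hij : i < j)
    (hst : π.st i = π.st j) : (π.loop i j hij hst).st k = π.st (loopIndex i (j - i) k) := rfl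

theorem Play.loop_act {G : GameStructure n V A B B0} (π : G.Play) (i j k : ℕ) (hij : i < j)
    (hst : π.st i = π.st j) : (π.loop i j hij hst).act k = π.act (loopIndex i (j - i) k) := rfl

end GameStructure

/-- Every finite game structure with recurring certainty also has periodic certainty: there is
a uniform bound `t` such that along every play, every prefix history extends within the play by
at most `t` further rounds to a history at which the grand coalition attains certainty. -/
theorem periodicCertainty_of_recurringCertainty
    {n : ℕ} {V : Type} {A : Fin n → Type} {B : Fin n → Type} {B0 : Type}
    (hn : 1 ≤ n) [Fintype V] [∀ i, Fintype (A i)] [∀ i, Nonempty (A i)]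
    [∀ i, Fintype (B i)] [Fintype B0]
    (G : GameStructure n V A B B0)
    (h : G.RecurringCertainty) : G.PeriodicCertainty := by
  classical
  haveI : Fintype (Set V) := Fintype.ofFinite _
  set T : ℕ := Fintype.card (V × Set V) with hT
  refine ⟨T, ?_⟩
  intro π m
  by_contra hcon
  push_neg at hcon
  -- hcon : ∀ ℓ, m ≤ ℓ → ℓ ≤ m + T → ¬ G.Certain (π.prefixWord ℓ)
  obtain ⟨i, j, him, hij, hjt, hstij, hKij⟩ :
      ∃ i j : ℕ, m ≤ i ∧ i < j ∧ j ≤ m + T ∧ π.st i = π.st j ∧ G.Kn π i = G.Kn π j := by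
    obtain ⟨x, y, hxy, hg⟩ := Fintype.exists_ne_map_eq_of_card_lt
      (fun k : Fin (T + 1) => (π.st (m + (k : ℕ)), G.Kn π (m + (k : ℕ))))
      (by rw [Fintype.card_fin]; omega)
    rw [Prod.mk.injEq] at hg
    have hx := x.isLt
    have hy := y.isLt
    rcases Nat.lt_or_ge (x : ℕ) (y : ℕ) with hc | hc
    · exact ⟨m + x, m + y, by omega, by omega, by omega, hg.1, hg.2⟩
    · have hc' : (y : ℕ) < (x : ℕ) := by
        rcases Nat.lt_or_ge (y : ℕ) (x : ℕ) with hcc | hcc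
        · exact hcc
        · exact absurd (Fin.ext (by omega)) hxy
      exact ⟨m + y, m + x, by omega, by omega, by omega, hg.1.symm, hg.2.symm⟩
  set π' := π.loop i j hij hstij with hπ'
  have segEq : ∀ q r : ℕ, r ≤ j - i →
      ((List.range r).map fun k => G.obs0 (π'.st (i + q * (j - i) + k + 1)))
        = (List.range r).map fun k => G.obs0 (π.st (i + k + 1)) := by
    intro q r hr
    apply List.map_congr_left
    intro k hk
    rw [List.mem_range] at hk
    have h1 : π'.st (i + q * (j - i) + k + 1) = π.st (i + (k + 1) % (j - i)) := by
      rw [hπ', GameStructure.Play.loop_st, loopIndex_ge _ _ _ (by omega)]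
      have e2 : i + q * (j - i) + k + 1 - i = (j - i) * q + (k + 1) := by
        have e1 : i + q * (j - i) + k + 1 = i + ((j - i) * q + (k + 1)) := by ring
        rw [e1, Nat.add_sub_cancel_left]
      rw [e2, Nat.mul_add_mod]
    by_cases hkd : k + 1 < j - i
    · rw [h1, Nat.mod_eq_of_lt hkd, show i + (k + 1) = i + k + 1 from by omega]
    · have hke : k + 1 = j - i := by omega
      have ej : i + k + 1 = j := by omega
      rw [h1, hke, Nat.mod_self, Nat.add_zero, ej, hstij]
  have hpre : π'.prefixWord i = π.prefixWord i := by
    unfold GameStructure.Play.prefixWord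
    apply List.map_congr_left
    intro k hk
    rw [List.mem_range] at hk
    have h1 : π'.act k = π.act k := by
      rw [hπ', GameStructure.Play.loop_act, loopIndex_le _ _ _ (by omega)]
    have h2 : π'.st (k + 1) = π.st (k + 1) := by
      rw [hπ', GameStructure.Play.loop_st, loopIndex_le _ _ _ (by omega)]
    rw [h1, h2]
  have C1 : ∀ q : ℕ, G.Kn π' (i + q * (j - i)) = G.Kn π i := by
    intro q
    induction q with
    | zero =>
      rw [Nat.zero_mul, Nat.add_zero]
      exact G.Kn_congr π' π i i hpre
    | succ q ih =>
      have e : i + (q + 1) * (j - i) = i + q * (j - i) + (j - i) := by ring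
      rw [e, G.Kn_add π' (i + q * (j - i)) (j - i), segEq q (j - i) le_rfl, ih,
        ← G.Kn_add π i (j - i), show i + (j - i) = j from by omega, hKij]
  have C2 : ∀ q r : ℕ, r ≤ j - i → G.Kn π' (i + q * (j - i) + r) = G.Kn π (i + r) := by
    intro q r hr
    rw [G.Kn_add π' (i + q * (j - i)) r, segEq q r hr, C1 q, ← G.Kn_add π i r]
  obtain ⟨ℓ, hiℓ, hcert⟩ := h π' i
  have hd : 0 < j - i := by omega
  set q := (ℓ - i) / (j - i) with hq
  set r := (ℓ - i) % (j - i) with hr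
  have hrd : r < j - i := Nat.mod_lt _ hd
  have hℓ : ℓ = i + q * (j - i) + r := by
    have h1 : (j - i) * q + r = ℓ - i := Nat.div_add_mod _ _
    calc ℓ = i + (ℓ - i) := by omega
    _ = i + ((j - i) * q + r) := by rw [h1]
    _ = i + q * (j - i) + r := by ring
  have hKℓ : G.Kn π' ℓ = G.Kn π (i + r) := by
    rw [hℓ]; exact C2 q r (le_of_lt hrd)
  have hstℓ : π'.st ℓ = π.st (i + r) := by
    rw [hπ', GameStructure.Play.loop_st, loopIndex_ge _ _ _ hiℓ, ← hr]
  have hnc := hcon (i + r) (by omega) (by omega)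
  rw [G.certain_iff] at hcert
  rw [hKℓ, hstℓ] at hcert
  exact hnc ((G.certain_iff π (i + r)).2 hcert)
end
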